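/- arXiv:2305.14417 — 3 statements merged into one kernel-verified Lean document; each statement's English description precedes it below -/
import Mathlib

section
/- Improved combined bound at fixed points: if β^λ_{ijkl}(λ, y) = 0 for all i, j, k, l and β^y_i(y) = 0 for all i, then S + (1/2) b₂ − 6 Y ≤ (1/8) Ns ε². -/
open Matrix

noncomputable section

/-- Entrywise complex conjugate of a matrix. -/
def mconj {Nf : ℕ} (A : Matrix (Fin Nf) (Fin Nf) ℂ) : Matrix (Fin Nf) (Fin Nf) ℂ :=
  A.map (starRingEnd ℂ)

/-- `Z_{ij} = Tr(y_i ȳ_j + ȳ_i y_j)` (a real number). -/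
def Zw {Ns Nf : ℕ} (y : Fin Ns → Matrix (Fin Nf) (Fin Nf) ℂ) (i j : Fin Ns) : ℝ :=
  (Matrix.trace (y i * mconj (y j) + mconj (y i) * y j)).re

/-- `X_{ijkl} = (1/4) Σ_σ Tr(y_{σ(i)} ȳ_{σ(j)} y_{σ(k)} ȳ_{σ(l)})`,
summing over all 24 permutations of the index list `(i,j,k,l)`. -/
def Xw {Ns Nf : ℕ} (y : Fin Ns → Matrix (Fin Nf) (Fin Nf) ℂ) (i j k l : Fin Ns) : ℝ :=
  (1 / 4) * (∑ σ : Equiv.Perm (Fin 4),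
    Matrix.trace (y (![i, j, k, l] (σ 0)) * mconj (y (![i, j, k, l] (σ 1))) *
      (y (![i, j, k, l] (σ 2)) * mconj (y (![i, j, k, l] (σ 3)))))).re

/-- Full permutation symmetry of the quartic coupling tensor. -/
def FullySymm {Ns : ℕ} (lam : Fin Ns → Fin Ns → Fin Ns → Fin Ns → ℝ) : Prop :=
  ∀ i j k l, lam i j k l = lam j i k l ∧ lam i j k l = lam i k j l ∧
    lam i j k l = lam i j l k

/-- One-loop quartic beta function for Weyl fermions (α = 2). -/
def betaLamW {Ns Nf : ℕ} (ε : ℝ) (lam : Fin Ns → Fin Ns → Fin Ns → Fin Ns → ℝ)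
    (y : Fin Ns → Matrix (Fin Nf) (Fin Nf) ℂ) (i j k l : Fin Ns) : ℝ :=
  -ε * lam i j k l
    + ∑ m, ∑ n, (lam i j m n * lam m n k l + lam i k m n * lam m n j l
        + lam i l m n * lam m n j k)
    - 4 * Xw y i j k l
    + (1 / 2) * ∑ m, (Zw y i m * lam m j k l + Zw y j m * lam i m k l
        + Zw y k m * lam i j m l + Zw y l m * lam i j k m)

/-- One-loop Yukawa beta function for Weyl fermions (α = 2). -/
def betaYW {Ns Nf : ℕ} (ε : ℝ) (y : Fin Ns → Matrix (Fin Nf) (Fin Nf) ℂ) (i : Fin Ns) :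
    Matrix (Fin Nf) (Fin Nf) ℂ :=
  (-(1 / 2) * (ε : ℂ)) • y i
    + (1 / 2 : ℂ) • ∑ j, (y j * mconj (y j) * y i + y i * mconj (y j) * y j
        + (4 : ℂ) • (y j * mconj (y i) * y j))
    + (1 / 2 : ℂ) • ∑ j, ((Zw y i j : ℂ) • y j)

/-- `a₀ = λ_{iijj}`. -/
def a0inv {Ns : ℕ} (lam : Fin Ns → Fin Ns → Fin Ns → Fin Ns → ℝ) : ℝ :=
  ∑ i, ∑ j, lam i i j j

/-- `a₁ = λ_{iimn} λ_{jjmn}`. -/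
def a1inv {Ns : ℕ} (lam : Fin Ns → Fin Ns → Fin Ns → Fin Ns → ℝ) : ℝ :=
  ∑ m, ∑ n, (∑ i, lam i i m n) * (∑ j, lam j j m n)

/-- `S = λ_{ijkl} λ_{ijkl} = ‖λ‖²`. -/
def Sinv {Ns : ℕ} (lam : Fin Ns → Fin Ns → Fin Ns → Fin Ns → ℝ) : ℝ :=
  ∑ i, ∑ j, ∑ k, ∑ l, lam i j k l ^ 2

/-- `b₀ = Z_{ii}`. -/
def b0inv {Ns Nf : ℕ} (y : Fin Ns → Matrix (Fin Nf) (Fin Nf) ℂ) : ℝ :=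
  ∑ i, Zw y i i

/-- `b₁ = Z_{ij} Z_{ij} − b₀²/Ns`. -/
def b1inv {Ns Nf : ℕ} (y : Fin Ns → Matrix (Fin Nf) (Fin Nf) ℂ) : ℝ :=
  (∑ i, ∑ j, Zw y i j ^ 2) - b0inv y ^ 2 / (Ns : ℝ)

/-- `b₂ = Σ_{i,j} (λ_{ijkk} − (a₀/Ns) δ_{ij} + Z_{ij} − (b₀/Ns) δ_{ij})²`. -/
def b2inv {Ns Nf : ℕ} (lam : Fin Ns → Fin Ns → Fin Ns → Fin Ns → ℝ)
    (y : Fin Ns → Matrix (Fin Nf) (Fin Nf) ℂ) : ℝ :=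
  ∑ i, ∑ j, ((∑ k, lam i j k k) - (a0inv lam / (Ns : ℝ)) * (if i = j then 1 else 0)
      + Zw y i j - (b0inv y / (Ns : ℝ)) * (if i = j then 1 else 0)) ^ 2

/-- `b₃ = X_{iijj}`. -/
def b3inv {Ns Nf : ℕ} (y : Fin Ns → Matrix (Fin Nf) (Fin Nf) ℂ) : ℝ :=
  ∑ i, ∑ j, Xw y i i j j

/-- `Y = Tr(y_i ȳ_i y_j ȳ_j) = ‖y_i ȳ_i‖²`. -/
def Yinv {Ns Nf : ℕ} (y : Fin Ns → Matrix (Fin Nf) (Fin Nf) ℂ) : ℝ :=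
  (∑ i, ∑ j, Matrix.trace (y i * mconj (y i) * (y j * mconj (y j)))).re

/-- `b̃₀ = a₀ b₀ / Ns`. -/
def btilde0 {Ns Nf : ℕ} (lam : Fin Ns → Fin Ns → Fin Ns → Fin Ns → ℝ)
    (y : Fin Ns → Matrix (Fin Nf) (Fin Nf) ℂ) : ℝ :=
  a0inv lam * b0inv y / (Ns : ℝ)

/-- The `A`-function `A_y(λ)` generating the one-loop quartic beta function. -/
def Afun {Ns Nf : ℕ} (ε : ℝ) (lam : Fin Ns → Fin Ns → Fin Ns → Fin Ns → ℝ)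
    (y : Fin Ns → Matrix (Fin Nf) (Fin Nf) ℂ) : ℝ :=
  -(1 / 2) * ε * (∑ i, ∑ j, ∑ k, ∑ l, lam i j k l * lam i j k l)
    + (∑ i, ∑ j, ∑ k, ∑ l, ∑ m, ∑ n, lam i j k l * lam k l m n * lam m n i j)
    - 4 * (∑ i, ∑ j, ∑ k, ∑ l, Xw y i j k l * lam i j k l)
    + (∑ i, ∑ j, ∑ k, ∑ l, ∑ m, Zw y i j * lam i k l m * lam j k l m)


/-! ### Auxiliary lemmas -/

def pp (v w : Fin 4 → Fin 4) (h1 : Function.LeftInverse w v := by decide)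
    (h2 : Function.RightInverse w v := by decide) : Equiv.Perm (Fin 4) := ⟨v, w, h1, h2⟩

def permList : Fin 24 → Equiv.Perm (Fin 4) :=
  ![pp ![0,1,2,3] ![0,1,2,3],
    pp ![0,1,3,2] ![0,1,3,2],
    pp ![0,2,1,3] ![0,2,1,3],
    pp ![0,2,3,1] ![0,3,1,2],
    pp ![0,3,1,2] ![0,2,3,1],
    pp ![0,3,2,1] ![0,3,2,1],
    pp ![1,0,2,3] ![1,0,2,3],
    pp ![1,0,3,2] ![1,0,3,2],
    pp ![1,2,0,3] ![2,0,1,3],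
    pp ![1,2,3,0] ![3,0,1,2],
    pp ![1,3,0,2] ![2,0,3,1],
    pp ![1,3,2,0] ![3,0,2,1],
    pp ![2,0,1,3] ![1,2,0,3],
    pp ![2,0,3,1] ![1,3,0,2],
    pp ![2,1,0,3] ![2,1,0,3],
    pp ![2,1,3,0] ![3,1,0,2],
    pp ![2,3,0,1] ![2,3,0,1],
    pp ![2,3,1,0] ![3,2,0,1],
    pp ![3,0,1,2] ![1,2,3,0],
    pp ![3,0,2,1] ![1,3,2,0],
    pp ![3,1,0,2] ![2,1,3,0],
    pp ![3,1,2,0] ![3,1,2,0],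
    pp ![3,2,0,1] ![2,3,1,0],
    pp ![3,2,1,0] ![3,2,1,0]]

lemma permList_bij : Function.Bijective permList := by decide

lemma perm4_sum {M : Type*} [AddCommMonoid M] (g : Fin 4 → Fin 4 → Fin 4 → Fin 4 → M) :
    ∑ σ : Equiv.Perm (Fin 4), g (σ 0) (σ 1) (σ 2) (σ 3)
      = g 0 1 2 3 + g 0 1 3 2 + g 0 2 1 3 + g 0 2 3 1 + g 0 3 1 2 + g 0 3 2 1 + g 1 0 2 3 + g 1 0 3 2 + g 1 2 0 3 + g 1 2 3 0 + g 1 3 0 2 + g 1 3 2 0 + g 2 0 1 3 + g 2 0 3 1 + g 2 1 0 3 + g 2 1 3 0 + g 2 3 0 1 + g 2 3 1 0 + g 3 0 1 2 + g 3 0 2 1 + g 3 1 0 2 + g 3 1 2 0 + g 3 2 0 1 + g 3 2 1 0 := by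
  rw [← Fintype.sum_bijective permList permList_bij _
    (fun σ => g (σ 0) (σ 1) (σ 2) (σ 3)) (fun k => rfl)]
  show ∑ k : Fin 24, g (permList k 0) (permList k 1) (permList k 2) (permList k 3) = _
  simp [Fin.sum_univ_succ, permList, pp]
  abel

section TraceLemmas

variable {Nf : ℕ}

lemma mconj_mul (A B : Matrix (Fin Nf) (Fin Nf) ℂ) : mconj (A*B) = mconj A * mconj B :=
  Matrix.map_mul

lemma mconj_transpose (A : Matrix (Fin Nf) (Fin Nf) ℂ) : (mconj A)ᵀ = mconj Aᵀ :=
  (Matrix.transpose_map).symm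

lemma trace_mconj (A : Matrix (Fin Nf) (Fin Nf) ℂ) :
    Matrix.trace (mconj A) = (starRingEnd ℂ) (Matrix.trace A) := by
  simp [Matrix.trace, mconj, Matrix.diag, map_sum]

lemma mconj_mconj (A : Matrix (Fin Nf) (Fin Nf) ℂ) : mconj (mconj A) = A := by
  ext i j; simp [mconj]

lemma trace_four (A B : Matrix (Fin Nf) (Fin Nf) ℂ) (hA : Aᵀ = A) (hB : Bᵀ = B) :
    Matrix.trace (A * mconj B * (B * mconj A))
      = Matrix.trace (B * mconj B * (A * mconj A)) := by
  have h1 : Matrix.trace (A * mconj B * (B * mconj A))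
      = Matrix.trace ((A * mconj B * (B * mconj A))ᵀ) := (Matrix.trace_transpose _).symm
  rw [h1]
  rw [Matrix.transpose_mul, Matrix.transpose_mul, Matrix.transpose_mul,
    mconj_transpose, mconj_transpose, hA, hB]
  rw [Matrix.trace_mul_comm]
  rw [show mconj B * A * (mconj A * B) = (mconj B * (A * mconj A)) * B from by
    noncomm_ring, Matrix.trace_mul_comm]
  noncomm_ring

lemma re_trace_symm (A B : Matrix (Fin Nf) (Fin Nf) ℂ) :
    (Matrix.trace (B * mconj A)).re = (Matrix.trace (A * mconj B)).re := by
  have : Matrix.trace (A * mconj B) = (starRingEnd ℂ) (Matrix.trace (mconj A * B)) := by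
    rw [← trace_mconj, mconj_mul, mconj_mconj]
  rw [this, Matrix.trace_mul_comm]
  simp

end TraceLemmas

/-- auxiliary invariant: `Y₃ = Σ Re Tr(y_i ȳ_j y_i ȳ_j)`. -/
def Y3inv {Ns Nf : ℕ} (y : Fin Ns → Matrix (Fin Nf) (Fin Nf) ℂ) : ℝ :=
  ∑ i, ∑ j, (Matrix.trace (y i * mconj (y j) * (y i * mconj (y j)))).re

section SumLemmas

variable {α : Type*} [Fintype α] {M : Type*} [AddCommMonoid M]

lemma sum_rot3 (F : α → α → α → M) :
    ∑ i, ∑ j, ∑ k, F i j k = ∑ j, ∑ k, ∑ i, F i j k := by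
  rw [Finset.sum_comm]
  exact Finset.sum_congr rfl fun j _ => Finset.sum_comm

lemma sum4_rot (F : α → α → α → α → M) :
    ∑ i, ∑ j, ∑ m, ∑ n, F i j m n = ∑ m, ∑ n, ∑ i, ∑ j, F i j m n := by
  have h1 : ∀ i, ∑ j, ∑ m, ∑ n, F i j m n = ∑ m, ∑ n, ∑ j, F i j m n :=
    fun i => sum_rot3 (fun j m n => F i j m n)
  simp_rw [h1]
  exact sum_rot3 (fun i m n => ∑ j, F i j m n)

lemma sum_swap' (F : α → α → M) : ∑ i, ∑ j, F j i = ∑ i, ∑ j, F i j :=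
  Finset.sum_comm

end SumLemmas

lemma Xw_iijj {Ns Nf : ℕ} (y : Fin Ns → Matrix (Fin Nf) (Fin Nf) ℂ)
    (hy : ∀ i, (y i)ᵀ = y i) (i j : Fin Ns) :
    Xw y i i j j = 2*(Matrix.trace (y i * mconj (y i) * (y j * mconj (y j)))).re
      + 2*(Matrix.trace (y j * mconj (y j) * (y i * mconj (y i)))).re
      + (Matrix.trace (y i * mconj (y j) * (y i * mconj (y j)))).re
      + (Matrix.trace (y j * mconj (y i) * (y j * mconj (y i)))).re := by
  unfold Xw
  rw [perm4_sum (fun a b c d => Matrix.trace (y (![i,i,j,j] a) * mconj (y (![i,i,j,j] b)) *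
    (y (![i,i,j,j] c) * mconj (y (![i,i,j,j] d)))))]
  simp only [Matrix.cons_val_zero, Matrix.cons_val_one, Matrix.head_cons,
    Matrix.cons_val_two, Matrix.cons_val_three, Matrix.tail_cons, Matrix.head_fin_const]
  rw [trace_four (y i) (y j) (hy i) (hy j), trace_four (y j) (y i) (hy j) (hy i)]
  simp only [Complex.add_re]
  ring

lemma symm_pair {Ns : ℕ} {lam : Fin Ns → Fin Ns → Fin Ns → Fin Ns → ℝ}
    (hsym : FullySymm lam) (a b c d : Fin Ns) : lam a b c d = lam c d a b := by
  have s1 : ∀ a b c d, lam a b c d = lam b a c d := fun a b c d => (hsym a b c d).1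
  have s2 : ∀ a b c d, lam a b c d = lam a c b d := fun a b c d => (hsym a b c d).2.1
  have s3 : ∀ a b c d, lam a b c d = lam a b d c := fun a b c d => (hsym a b c d).2.2
  rw [s2 a b c d, s1 a c b d, s3 c a b d, s2 c a d b]

lemma eqA {Ns Nf : ℕ} (ε : ℝ) (lam : Fin Ns → Fin Ns → Fin Ns → Fin Ns → ℝ)
    (y : Fin Ns → Matrix (Fin Nf) (Fin Nf) ℂ)
    (hsym : FullySymm lam) (hy : ∀ i, (y i)ᵀ = y i)
    (hfpl : ∀ i j k l, betaLamW ε lam y i j k l = 0) :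
    ε * a0inv lam
      = (∑ i, ∑ j, (∑ k, lam i j k k) * (∑ k, lam i j k k))
        + 2 * Sinv lam - 16 * Yinv y - 8 * Y3inv y
        + 2 * (∑ i, ∑ j, Zw y i j * (∑ k, lam i j k k)) := by
  have s1 : ∀ a b c d, lam a b c d = lam b a c d := fun a b c d => (hsym a b c d).1
  have sp := symm_pair hsym
  have h0 : (∑ i, ∑ j, betaLamW ε lam y i i j j) = 0 :=
    Finset.sum_eq_zero fun i _ => Finset.sum_eq_zero fun j _ => hfpl i i j j
  have hsplit : ∑ i, ∑ j, betaLamW ε lam y i i j j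
      = (∑ i, ∑ j, (-ε * lam i i j j))
        + ((∑ i, ∑ j, ∑ m, ∑ n, lam i i m n * lam m n j j)
          + (∑ i, ∑ j, ∑ m, ∑ n, lam i j m n * lam m n i j)
          + (∑ i, ∑ j, ∑ m, ∑ n, lam i j m n * lam m n i j))
        - 4 * (∑ i, ∑ j, Xw y i i j j)
        + (1/2) * ((∑ i, ∑ j, ∑ m, Zw y i m * lam m i j j)
          + (∑ i, ∑ j, ∑ m, Zw y i m * lam i m j j)
          + (∑ i, ∑ j, ∑ m, Zw y j m * lam i i m j)
          + (∑ i, ∑ j, ∑ m, Zw y j m * lam i i j m)) := by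
    simp only [betaLamW, Finset.mul_sum, mul_add, Finset.sum_add_distrib,
      Finset.sum_sub_distrib]
  -- piece 1
  have hp1 : (∑ i, ∑ j, (-ε * lam i i j j)) = -(ε * a0inv lam) := by
    simp [a0inv, Finset.mul_sum]
  -- piece 2a
  have hp2a : (∑ i, ∑ j, ∑ m, ∑ n, lam i i m n * lam m n j j)
      = ∑ i, ∑ j, (∑ k, lam i j k k) * (∑ k, lam i j k k) := by
    have hpt : (∑ i, ∑ j, ∑ m, ∑ n, lam i i m n * lam m n j j)
        = ∑ i, ∑ j, ∑ m, ∑ n, lam m n i i * lam m n j j :=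
      Finset.sum_congr rfl fun i _ => Finset.sum_congr rfl fun j _ =>
        Finset.sum_congr rfl fun m _ => Finset.sum_congr rfl fun n _ => by rw [sp i i m n]
    rw [hpt, sum4_rot (fun i j m n => lam m n i i * lam m n j j)]
    exact Finset.sum_congr rfl fun m _ => Finset.sum_congr rfl fun n _ =>
      (Finset.sum_mul_sum _ _ _ _).symm
  -- piece 2b
  have hp2b : (∑ i, ∑ j, ∑ m, ∑ n, lam i j m n * lam m n i j) = Sinv lam := by
    have hpt : ∀ (i j m n : Fin Ns), lam i j m n * lam m n i j = lam i j m n ^ 2 :=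
      fun i j m n => by rw [← sp i j m n]; ring
    simp_rw [hpt]
    rfl
  -- piece 3
  have hp3 : (∑ i, ∑ j, Xw y i i j j) = 4 * Yinv y + 2 * Y3inv y := by
    simp_rw [Xw_iijj y hy]
    have hY : Yinv y
        = ∑ i, ∑ j, (Matrix.trace (y i * mconj (y i) * (y j * mconj (y j)))).re := by
      simp [Yinv, Complex.re_sum]
    have h1 : ∑ i, ∑ j, (Matrix.trace (y j * mconj (y j) * (y i * mconj (y i)))).re
        = ∑ i, ∑ j, (Matrix.trace (y i * mconj (y i) * (y j * mconj (y j)))).re :=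
      sum_swap' _
    have h2 : ∑ i, ∑ j, (Matrix.trace (y j * mconj (y i) * (y j * mconj (y i)))).re
        = ∑ i, ∑ j, (Matrix.trace (y i * mconj (y j) * (y i * mconj (y j)))).re :=
      sum_swap' _
    simp only [Finset.sum_add_distrib, ← Finset.mul_sum]
    rw [hY, Y3inv]
    rw [h1, h2]
    ring
  -- piece 4 components
  have hp4a : (∑ i, ∑ j, ∑ m, Zw y i m * lam m i j j)
      = ∑ i, ∑ j, Zw y i j * (∑ k, lam i j k k) := by
    have hpt : ∀ (i j m : Fin Ns), Zw y i m * lam m i j j = Zw y i m * lam i m j j :=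
      fun i j m => by rw [s1 m i j j]
    simp_rw [hpt]
    refine Finset.sum_congr rfl fun i _ => ?_
    rw [Finset.sum_comm]
    exact Finset.sum_congr rfl fun m _ => (Finset.mul_sum _ _ _).symm
  have hp4b : (∑ i, ∑ j, ∑ m, Zw y i m * lam i m j j)
      = ∑ i, ∑ j, Zw y i j * (∑ k, lam i j k k) := by
    refine Finset.sum_congr rfl fun i _ => ?_
    rw [Finset.sum_comm]
    exact Finset.sum_congr rfl fun m _ => (Finset.mul_sum _ _ _).symm
  have hp4c : (∑ i, ∑ j, ∑ m, Zw y j m * lam i i m j)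
      = ∑ i, ∑ j, Zw y i j * (∑ k, lam i j k k) := by
    have hpt : (∑ i, ∑ j, ∑ m, Zw y j m * lam i i m j)
        = ∑ i, ∑ j, ∑ m, Zw y j m * lam j m i i :=
      Finset.sum_congr rfl fun i _ => Finset.sum_congr rfl fun j _ =>
        Finset.sum_congr rfl fun m _ => by rw [sp i i m j, s1 m j i i]
    rw [hpt, sum_rot3 (fun i j m => Zw y j m * lam j m i i)]
    exact Finset.sum_congr rfl fun j _ => Finset.sum_congr rfl fun m _ =>
      (Finset.mul_sum _ _ _).symm
  have hp4d : (∑ i, ∑ j, ∑ m, Zw y j m * lam i i j m)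
      = ∑ i, ∑ j, Zw y i j * (∑ k, lam i j k k) := by
    have hpt : (∑ i, ∑ j, ∑ m, Zw y j m * lam i i j m)
        = ∑ i, ∑ j, ∑ m, Zw y j m * lam j m i i :=
      Finset.sum_congr rfl fun i _ => Finset.sum_congr rfl fun j _ =>
        Finset.sum_congr rfl fun m _ => by rw [sp i i j m]
    rw [hpt, sum_rot3 (fun i j m => Zw y j m * lam j m i i)]
    exact Finset.sum_congr rfl fun j _ => Finset.sum_congr rfl fun m _ =>
      (Finset.mul_sum _ _ _).symm
  rw [hsplit, hp1, hp2a, hp2b, hp3, hp4a, hp4b, hp4c, hp4d] at h0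
  linarith
lemma re_trace_half {Ns Nf : ℕ} (y : Fin Ns → Matrix (Fin Nf) (Fin Nf) ℂ) (i j : Fin Ns) :
    (Matrix.trace (y j * mconj (y i))).re = Zw y i j / 2 := by
  have h2 : Matrix.trace (mconj (y i) * y j) = Matrix.trace (y j * mconj (y i)) :=
    Matrix.trace_mul_comm _ _
  unfold Zw
  rw [Matrix.trace_add, Complex.add_re, h2, re_trace_symm (y j) (y i)]
  ring

lemma sum_retrace_b0 {Ns Nf : ℕ} (y : Fin Ns → Matrix (Fin Nf) (Fin Nf) ℂ) :
    ∑ i, (Matrix.trace (y i * mconj (y i))).re = b0inv y / 2 := by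
  have h : ∀ i : Fin Ns, Zw y i i = 2 * (Matrix.trace (y i * mconj (y i))).re := by
    intro i
    unfold Zw
    rw [Matrix.trace_add, Complex.add_re, Matrix.trace_mul_comm]
    ring
  unfold b0inv
  rw [Finset.sum_congr rfl (fun i _ => h i), ← Finset.mul_sum]
  ring

lemma eqB {Ns Nf : ℕ} (ε : ℝ) (y : Fin Ns → Matrix (Fin Nf) (Fin Nf) ℂ)
    (hy : ∀ i, (y i)ᵀ = y i) (hfpy : ∀ i, betaYW ε y i = 0) :
    ε * b0inv y = 4 * Yinv y + 8 * Y3inv y + ∑ i, ∑ j, Zw y i j ^ 2 := by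
  have hexp : ∀ i, (Matrix.trace (betaYW ε y i * mconj (y i))).re
      = -(1/2)*ε*(Matrix.trace (y i * mconj (y i))).re
        + (∑ j, (Matrix.trace (y i * mconj (y i) * (y j * mconj (y j)))).re)
        + 2*(∑ j, (Matrix.trace (y j * mconj (y i) * (y j * mconj (y i)))).re)
        + (1/4)*(∑ j, Zw y i j ^ 2) := by
    intro i
    have t1 : ∀ j, Matrix.trace (y j * mconj (y j) * y i * mconj (y i))
        = Matrix.trace (y i * mconj (y i) * (y j * mconj (y j))) := by
      intro j
      rw [mul_assoc (y j * mconj (y j)) (y i) (mconj (y i)), Matrix.trace_mul_comm]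
    have t2 : ∀ j, Matrix.trace (y i * mconj (y j) * y j * mconj (y i))
        = Matrix.trace (y i * mconj (y i) * (y j * mconj (y j))) := by
      intro j
      rw [mul_assoc (y i * mconj (y j)) (y j) (mconj (y i)),
        trace_four (y i) (y j) (hy i) (hy j), Matrix.trace_mul_comm]
    have t3 : ∀ j, Matrix.trace (y j * mconj (y i) * y j * mconj (y i))
        = Matrix.trace (y j * mconj (y i) * (y j * mconj (y i))) := by
      intro j
      rw [mul_assoc (y j * mconj (y i)) (y j) (mconj (y i))]
    have t4 : ∀ j, (Matrix.trace (y j * mconj (y i))).re = Zw y i j / 2 :=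
      fun j => re_trace_half y i j
    simp [betaYW, Matrix.add_mul, Finset.sum_mul, smul_mul_assoc, Matrix.trace_add,
      Matrix.trace_smul, Matrix.trace_sum, smul_eq_mul, Complex.add_re, Complex.re_sum,
      Complex.mul_re, Complex.ofReal_re, Complex.ofReal_im, Finset.mul_sum,
      t1, t2, t3, t4, Finset.sum_add_distrib]
    have e2 : (∑ x : Fin Ns, 2⁻¹ * (4 * (Matrix.trace (y x * mconj (y i) * (y x * mconj (y i)))).re))
        = ∑ x : Fin Ns, 2 * (Matrix.trace (y x * mconj (y i) * (y x * mconj (y i)))).re :=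
      Finset.sum_congr rfl fun x _ => by ring
    have e3 : (∑ x : Fin Ns, 2⁻¹ * (Zw y i x * (Zw y i x / 2)))
        = ∑ x : Fin Ns, 4⁻¹ * Zw y i x ^ 2 :=
      Finset.sum_congr rfl fun x _ => by ring
    have e1 : (∑ x : Fin Ns, 2⁻¹ * (Matrix.trace (y i * mconj (y i) * (y x * mconj (y x)))).re)
        = 2⁻¹ * ∑ x : Fin Ns, (Matrix.trace (y i * mconj (y i) * (y x * mconj (y x)))).re :=
      (Finset.mul_sum _ _ _).symm
    rw [e2, e3, e1]
    linarith
  have h0 : ∑ i, (Matrix.trace (betaYW ε y i * mconj (y i))).re = 0 :=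
    Finset.sum_eq_zero fun i _ => by rw [hfpy i]; simp
  rw [Finset.sum_congr rfl (fun i _ => hexp i)] at h0
  simp only [Finset.sum_add_distrib, ← Finset.mul_sum] at h0
  have hg : ∑ i, ∑ j, (Matrix.trace (y i * mconj (y i) * (y j * mconj (y j)))).re
      = Yinv y := by
    simp [Yinv, Complex.re_sum]
  have hh : ∑ i, ∑ j, (Matrix.trace (y j * mconj (y i) * (y j * mconj (y i)))).re
      = Y3inv y := sum_swap' _
  have hb0 := sum_retrace_b0 y
  rw [hg, hh, hb0] at h0
  linarith
lemma eqb2 {Ns Nf : ℕ} (hNs : 1 ≤ Ns) (lam : Fin Ns → Fin Ns → Fin Ns → Fin Ns → ℝ)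
    (y : Fin Ns → Matrix (Fin Nf) (Fin Nf) ℂ) :
    b2inv lam y
      = (∑ i, ∑ j, ((∑ k, lam i j k k) + Zw y i j) * ((∑ k, lam i j k k) + Zw y i j))
        - (a0inv lam + b0inv y)^2 / (Ns : ℝ) := by
  have hNs0 : (Ns:ℝ) ≠ 0 := Nat.cast_ne_zero.mpr (by omega)
  have hpt : ∀ i j : Fin Ns, ((∑ k, lam i j k k) - (a0inv lam / (Ns:ℝ)) * (if i = j then 1 else 0)
      + Zw y i j - (b0inv y / (Ns:ℝ)) * (if i = j then 1 else 0)) ^ 2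
      = ((∑ k, lam i j k k) + Zw y i j) * ((∑ k, lam i j k k) + Zw y i j)
        - (2*(a0inv lam + b0inv y)/(Ns:ℝ))
            * (if i = j then ((∑ k, lam i j k k) + Zw y i j) else 0)
        + ((a0inv lam + b0inv y)/(Ns:ℝ))^2 * (if i = j then 1 else 0) := by
    intro i j
    by_cases h : i = j <;> simp [h] <;> ring
  unfold b2inv
  rw [Finset.sum_congr rfl (fun i _ => Finset.sum_congr rfl (fun j _ => hpt i j))]
  simp only [Finset.sum_add_distrib, Finset.sum_sub_distrib]
  have h1 : ∀ i : Fin Ns, (∑ j, (2*(a0inv lam + b0inv y)/(Ns:ℝ))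
      * (if i = j then ((∑ k, lam i j k k) + Zw y i j) else 0))
      = (2*(a0inv lam + b0inv y)/(Ns:ℝ)) * ((∑ k, lam i i k k) + Zw y i i) := by
    intro i
    rw [← Finset.mul_sum]
    congr 1
    simp [Finset.sum_ite_eq]
  have h2 : ∀ i : Fin Ns, (∑ j, ((a0inv lam + b0inv y)/(Ns:ℝ))^2 * (if i = j then (1:ℝ) else 0))
      = ((a0inv lam + b0inv y)/(Ns:ℝ))^2 := by
    intro i
    rw [← Finset.mul_sum]
    simp [Finset.sum_ite_eq]
  rw [Finset.sum_congr rfl (fun i _ => h1 i), Finset.sum_congr rfl (fun i _ => h2 i)]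
  rw [← Finset.mul_sum, Finset.sum_add_distrib]
  have hda : (∑ i : Fin Ns, ∑ k, lam i i k k) = a0inv lam := rfl
  have hdb : (∑ i : Fin Ns, Zw y i i) = b0inv y := rfl
  rw [hda, hdb, Finset.sum_const, Finset.card_univ, Fintype.card_fin, nsmul_eq_mul]
  field_simp
  ring
/-- Improved combined bound at fixed points: `S + (1/2) b₂ − 6 Y ≤ (1/8) Ns ε²`. -/
theorem improved_combined_bound {Ns Nf : ℕ} (hNs : 1 ≤ Ns) (hNf : 1 ≤ Nf)
    (ε : ℝ) (lam : Fin Ns → Fin Ns → Fin Ns → Fin Ns → ℝ)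
    (y : Fin Ns → Matrix (Fin Nf) (Fin Nf) ℂ)
    (hsym : FullySymm lam) (hy : ∀ i, (y i)ᵀ = y i)
    (hfpl : ∀ i j k l, betaLamW ε lam y i j k l = 0)
    (hfpy : ∀ i, betaYW ε y i = 0) :
    Sinv lam + (1 / 2) * b2inv lam y - 6 * Yinv y ≤ (1 / 8) * (Ns : ℝ) * ε ^ 2 := by
  have hA := eqA ε lam y hsym hy hfpl
  have hB := eqB ε y hy hfpy
  have hb2 := eqb2 hNs lam y
  have hPP : (∑ i, ∑ j, ((∑ k, lam i j k k) + Zw y i j) * ((∑ k, lam i j k k) + Zw y i j))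
      = (∑ i, ∑ j, (∑ k, lam i j k k) * (∑ k, lam i j k k))
        + 2 * (∑ i, ∑ j, Zw y i j * (∑ k, lam i j k k)) + ∑ i, ∑ j, Zw y i j ^ 2 := by
    have hpt : ∀ i j : Fin Ns, ((∑ k, lam i j k k) + Zw y i j) * ((∑ k, lam i j k k) + Zw y i j)
        = (∑ k, lam i j k k) * (∑ k, lam i j k k)
          + 2 * (Zw y i j * (∑ k, lam i j k k)) + Zw y i j ^ 2 := fun i j => by ring
    rw [Finset.sum_congr rfl fun i _ => Finset.sum_congr rfl fun j _ => hpt i j]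
    simp [Finset.sum_add_distrib, Finset.mul_sum]
  have hNs0 : (0:ℝ) < (Ns:ℝ) := by
    have : 0 < Ns := by omega
    exact_mod_cast this
  have hu : (a0inv lam + b0inv y)^2 / (Ns:ℝ) * (Ns:ℝ) = (a0inv lam + b0inv y)^2 :=
    div_mul_cancel₀ _ (ne_of_gt hNs0)
  have key : ε * (a0inv lam + b0inv y) - (a0inv lam + b0inv y)^2/(Ns:ℝ) ≤ (Ns:ℝ)*ε^2/4 := by
    nlinarith [sq_nonneg ((Ns:ℝ)*ε - 2*(a0inv lam + b0inv y)), hNs0, hu]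
  linarith [hA, hB, hb2, hPP, key]
end
end

section
/- Norm bound at fixed points (the paper's headline bound): if β^λ_{ijkl}(λ, y) = 0 for all i, j, k, l and β^y_i(y) = 0 for all i, then S − 6 Y ≤ (1/8) Ns ε², i.e. the tensorial norms satisfy ‖λ‖² − 6 ‖y_i ȳ_i‖² ≤ (1/8) Ns ε². -/
open Matrix

noncomputable section

namespace SFaux

open Equiv Finset

variable {Ns Nf : ℕ}

/-- `t_{ij} = λ_{ijkk}`. -/
def tm (lam : Fin Ns → Fin Ns → Fin Ns → Fin Ns → ℝ) (i j : Fin Ns) : ℝ :=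
  ∑ k, lam i j k k

lemma mconj_mul (A B : Matrix (Fin Nf) (Fin Nf) ℂ) :
    mconj (A * B) = mconj A * mconj B := Matrix.map_mul

lemma mconj_mconj (A : Matrix (Fin Nf) (Fin Nf) ℂ) : mconj (mconj A) = A := by
  simp only [mconj, Matrix.map_map]
  convert Matrix.map_id A
  · ext z; simp

lemma trace_mconj (A : Matrix (Fin Nf) (Fin Nf) ℂ) :
    Matrix.trace (mconj A) = (starRingEnd ℂ) (Matrix.trace A) := by
  simp [mconj, Matrix.trace, Matrix.diag, map_sum]

lemma Zw_eq (y : Fin Ns → Matrix (Fin Nf) (Fin Nf) ℂ) (i j : Fin Ns) :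
    Zw y i j = 2 * (Matrix.trace (y i * mconj (y j))).re := by
  unfold Zw
  rw [Matrix.trace_add]
  have h : Matrix.trace (mconj (y i) * y j)
      = (starRingEnd ℂ) (Matrix.trace (y i * mconj (y j))) := by
    rw [← trace_mconj, mconj_mul, mconj_mconj]
  rw [h]
  simp [Complex.add_re]
  ring

lemma Zw_symm (y : Fin Ns → Matrix (Fin Nf) (Fin Nf) ℂ) (i j : Fin Ns) :
    Zw y i j = Zw y j i := by
  rw [Zw_eq, Zw_eq]
  have h : Matrix.trace (y j * mconj (y i))
      = (starRingEnd ℂ) (Matrix.trace (y i * mconj (y j))) := by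
    rw [Matrix.trace_mul_comm, ← trace_mconj, mconj_mul, mconj_mconj]
  rw [h, Complex.conj_re]

lemma c2 {α M : Type*} [Fintype α] [AddCommMonoid M] (f : α → α → M) :
    ∑ a, ∑ b, f a b = ∑ b, ∑ a, f a b := Finset.sum_comm

lemma c3 {α M : Type*} [Fintype α] [AddCommMonoid M] (f : α → α → α → M) :
    ∑ a, ∑ b, ∑ c, f a b c = ∑ c, ∑ a, ∑ b, f a b c := by
  rw [show (∑ a, ∑ b, ∑ c, f a b c) = ∑ a, ∑ c, ∑ b, f a b c from
    Finset.sum_congr rfl fun a _ => Finset.sum_comm]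
  exact Finset.sum_comm

lemma sum_swap4 {α M : Type*} [Fintype α] [AddCommMonoid M] (f : α → α → α → α → M) :
    ∑ i, ∑ k, ∑ m, ∑ l, f i k m l = ∑ m, ∑ l, ∑ i, ∑ k, f i k m l := by
  rw [c3 (fun i k m => ∑ l, f i k m l)]
  exact Finset.sum_congr rfl fun m _ => c3 (fun i k l => f i k m l)

lemma perm4_sum {M : Type*} [AddCommMonoid M] (f : Fin 4 → Fin 4 → Fin 4 → Fin 4 → M) :
    ∑ σ : Equiv.Perm (Fin 4), f (σ 0) (σ 1) (σ 2) (σ 3) =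
      f 0 1 2 3 + f 0 1 3 2 + f 0 2 1 3 + f 0 2 3 1 + f 0 3 1 2 + f 0 3 2 1 +
      f 1 0 2 3 + f 1 0 3 2 + f 1 2 0 3 + f 1 2 3 0 + f 1 3 0 2 + f 1 3 2 0 +
      f 2 0 1 3 + f 2 0 3 1 + f 2 1 0 3 + f 2 1 3 0 + f 2 3 0 1 + f 2 3 1 0 +
      f 3 0 1 2 + f 3 0 2 1 + f 3 1 0 2 + f 3 1 2 0 + f 3 2 0 1 + f 3 2 1 0 := by
  have huniv : (Finset.univ : Finset (Equiv.Perm (Fin 4))) =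
      {(1 : Equiv.Perm (Fin 4)), swap 2 3, swap 1 2, swap 1 3 * swap 1 2, swap 1 2 * swap 1 3,
       swap 1 3, swap 0 1, swap 0 1 * swap 2 3, swap 0 2 * swap 0 1,
       swap 0 3 * swap 0 2 * swap 0 1, swap 0 2 * swap 0 3 * swap 0 1, swap 0 3 * swap 0 1,
       swap 0 1 * swap 0 2, swap 0 1 * swap 0 3 * swap 0 2, swap 0 2, swap 0 3 * swap 0 2,
       swap 0 2 * swap 1 3, swap 0 3 * swap 0 1 * swap 0 2, swap 0 1 * swap 0 2 * swap 0 3,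
       swap 0 1 * swap 0 3, swap 0 2 * swap 0 3, swap 0 3, swap 0 2 * swap 0 1 * swap 0 3,
       swap 0 3 * swap 1 2} := by decide
  rw [huniv]
  simp (config := { decide := true }) [Finset.sum_insert, Finset.mem_insert,
    Equiv.Perm.mul_apply, Equiv.swap_apply_def]
  abel

lemma Xw_iikk (y : Fin Ns → Matrix (Fin Nf) (Fin Nf) ℂ) (i k : Fin Ns) :
    Xw y i i k k =
      (Matrix.trace (y i * mconj (y i) * (y k * mconj (y k)))).re
      + (Matrix.trace (y i * mconj (y k) * (y i * mconj (y k)))).re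
      + (Matrix.trace (y i * mconj (y k) * (y k * mconj (y i)))).re
      + (Matrix.trace (y k * mconj (y i) * (y i * mconj (y k)))).re
      + (Matrix.trace (y k * mconj (y i) * (y k * mconj (y i)))).re
      + (Matrix.trace (y k * mconj (y k) * (y i * mconj (y i)))).re := by
  unfold Xw
  rw [perm4_sum (fun a b c d => Matrix.trace (y (![i,i,k,k] a) * mconj (y (![i,i,k,k] b)) *
      (y (![i,i,k,k] c) * mconj (y (![i,i,k,k] d)))))]
  norm_num [Matrix.cons_val_zero, Matrix.cons_val_one, Matrix.head_cons, Matrix.cons_val_two,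
    Matrix.cons_val_three, Matrix.tail_cons, Complex.add_re]
  ring

/-- cyclic/conjugation identity: `Tr(y_i ȳ_k y_k ȳ_i)` has the same real part as
`Tr(y_k ȳ_k y_i ȳ_i)`. -/
lemma re_trace_cyc (y : Fin Ns → Matrix (Fin Nf) (Fin Nf) ℂ) (i k : Fin Ns) :
    (Matrix.trace (y i * mconj (y k) * (y k * mconj (y i)))).re
      = (Matrix.trace (y k * mconj (y k) * (y i * mconj (y i)))).re := by
  have step : Matrix.trace (y i * mconj (y k) * (y k * mconj (y i)))
      = (starRingEnd ℂ) (Matrix.trace (y k * mconj (y k) * (y i * mconj (y i)))) := by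
    rw [← trace_mconj]
    simp only [mconj_mul, mconj_mconj]
    rw [show y i * mconj (y k) * (y k * mconj (y i))
        = y i * (mconj (y k) * (y k * mconj (y i))) from by rw [Matrix.mul_assoc]]
    rw [Matrix.trace_mul_comm]
    simp only [Matrix.mul_assoc]
  rw [step, Complex.conj_re]

end SFaux

set_option maxHeartbeats 2000000

/-- Norm bound at fixed points (headline bound): `‖λ‖² − 6 ‖y_i ȳ_i‖² ≤ (1/8) Ns ε²`. -/
theorem norm_bound {Ns Nf : ℕ} (hNs : 1 ≤ Ns) (hNf : 1 ≤ Nf)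
    (ε : ℝ) (lam : Fin Ns → Fin Ns → Fin Ns → Fin Ns → ℝ)
    (y : Fin Ns → Matrix (Fin Nf) (Fin Nf) ℂ)
    (hsym : FullySymm lam) (hy : ∀ i, (y i)ᵀ = y i)
    (hfpl : ∀ i j k l, betaLamW ε lam y i j k l = 0)
    (hfpy : ∀ i, betaYW ε y i = 0) :
    Sinv lam - 6 * Yinv y ≤ (1 / 8) * (Ns : ℝ) * ε ^ 2 := by
  classical
  have hps : ∀ a b c d, lam a b c d = lam c d a b := by
    intro a b c d
    calc lam a b c d = lam a c b d := (hsym a b c d).2.1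
      _ = lam c a b d := (hsym a c b d).1
      _ = lam c a d b := (hsym c a b d).2.2
      _ = lam c d a b := (hsym c a d b).2.1
  have htm : ∀ a b, SFaux.tm lam a b = SFaux.tm lam b a := by
    intro a b
    exact Finset.sum_congr rfl fun k _ => (hsym a b k k).1
  -- `Yinv` as a double sum of real parts
  have f1 : Yinv y = (∑ i, ∑ k, (Matrix.trace (y i * mconj (y i) * (y k * mconj (y k)))).re) := by
    unfold Yinv
    rw [Complex.re_sum]
    exact Finset.sum_congr rfl fun i _ => Complex.re_sum _ _
  -- `TR = YR`
  have f2 : (∑ i, ∑ k, (Matrix.trace (y i * mconj (y k) * (y k * mconj (y i)))).re) = (∑ i, ∑ k, (Matrix.trace (y i * mconj (y i) * (y k * mconj (y k)))).re) := by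
    calc (∑ i, ∑ k, (Matrix.trace (y i * mconj (y k) * (y k * mconj (y i)))).re) = ∑ i, ∑ k, (Matrix.trace (y k * mconj (y k) * (y i * mconj (y i)))).re :=
        Finset.sum_congr rfl fun i _ => Finset.sum_congr rfl fun k _ => SFaux.re_trace_cyc y i k
      _ = (∑ i, ∑ k, (Matrix.trace (y i * mconj (y i) * (y k * mconj (y k)))).re) := SFaux.c2 _
  -- the fully contracted `X` sum
  have f3 : (∑ i, ∑ k, Xw y i i k k) = 2 * (∑ i, ∑ k, (Matrix.trace (y i * mconj (y i) * (y k * mconj (y k)))).re) + 2 * (∑ i, ∑ k, (Matrix.trace (y i * mconj (y k) * (y i * mconj (y k)))).re) + 2 * (∑ i, ∑ k, (Matrix.trace (y i * mconj (y k) * (y k * mconj (y i)))).re) := by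
    have e1 : ∑ i, ∑ k, (Matrix.trace (y k * mconj (y i) * (y i * mconj (y k)))).re = (∑ i, ∑ k, (Matrix.trace (y i * mconj (y k) * (y k * mconj (y i)))).re) := SFaux.c2 _
    have e2 : ∑ i, ∑ k, (Matrix.trace (y k * mconj (y i) * (y k * mconj (y i)))).re = (∑ i, ∑ k, (Matrix.trace (y i * mconj (y k) * (y i * mconj (y k)))).re) := SFaux.c2 _
    have e3 : ∑ i, ∑ k, (Matrix.trace (y k * mconj (y k) * (y i * mconj (y i)))).re = (∑ i, ∑ k, (Matrix.trace (y i * mconj (y i) * (y k * mconj (y k)))).re) := SFaux.c2 _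
    calc (∑ i, ∑ k, Xw y i i k k) = ∑ i, ∑ k, ((Matrix.trace (y i * mconj (y i) * (y k * mconj (y k)))).re + (Matrix.trace (y i * mconj (y k) * (y i * mconj (y k)))).re
          + (Matrix.trace (y i * mconj (y k) * (y k * mconj (y i)))).re + (Matrix.trace (y k * mconj (y i) * (y i * mconj (y k)))).re + (Matrix.trace (y k * mconj (y i) * (y k * mconj (y i)))).re
          + (Matrix.trace (y k * mconj (y k) * (y i * mconj (y i)))).re) :=
        Finset.sum_congr rfl fun i _ => Finset.sum_congr rfl fun k _ => SFaux.Xw_iikk y i k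
      _ = (∑ i, ∑ k, (Matrix.trace (y i * mconj (y i) * (y k * mconj (y k)))).re) + (∑ i, ∑ k, (Matrix.trace (y i * mconj (y k) * (y i * mconj (y k)))).re) + (∑ i, ∑ k, (Matrix.trace (y i * mconj (y k) * (y k * mconj (y i)))).re) + (∑ i, ∑ k, (Matrix.trace (y k * mconj (y i) * (y i * mconj (y k)))).re)
          + (∑ i, ∑ k, (Matrix.trace (y k * mconj (y i) * (y k * mconj (y i)))).re) + (∑ i, ∑ k, (Matrix.trace (y k * mconj (y k) * (y i * mconj (y i)))).re) := by
        simp only [Finset.sum_add_distrib]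
      _ = 2 * (∑ i, ∑ k, (Matrix.trace (y i * mconj (y i) * (y k * mconj (y k)))).re) + 2 * (∑ i, ∑ k, (Matrix.trace (y i * mconj (y k) * (y i * mconj (y k)))).re) + 2 * (∑ i, ∑ k, (Matrix.trace (y i * mconj (y k) * (y k * mconj (y i)))).re) := by rw [e1, e2, e3]; ring
  ------------------------------------------------------------------
  -- Equation E1 : contraction of the quartic beta function
  ------------------------------------------------------------------
  have hsplit : ∀ i k, betaLamW ε lam y i i k k =
      (-ε * lam i i k k) + (∑ m, ∑ n, lam i i m n * lam m n k k)
      + (∑ m, ∑ n, lam i k m n * lam m n i k) + (∑ m, ∑ n, lam i k m n * lam m n i k)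
      + (-(4 * Xw y i i k k))
      + ((1/2) * ∑ m, Zw y i m * lam m i k k) + ((1/2) * ∑ m, Zw y i m * lam i m k k)
      + ((1/2) * ∑ m, Zw y k m * lam i i m k) + ((1/2) * ∑ m, Zw y k m * lam i i k m) := by
    intro i k
    unfold betaLamW
    simp only [Finset.sum_add_distrib]
    ring
  have q1 : ∑ i, ∑ k, (-ε * lam i i k k) = -ε * (∑ i, SFaux.tm lam i i) := by
    simp only [← Finset.mul_sum]
    rfl
  have q2 : (∑ i, ∑ k, ∑ m, ∑ n, lam i i m n * lam m n k k) = (∑ i, ∑ k, SFaux.tm lam i k * SFaux.tm lam i k) := by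
    calc (∑ i, ∑ k, ∑ m, ∑ n, lam i i m n * lam m n k k)
        = ∑ i, ∑ k, ∑ m, ∑ n, lam m n i i * lam m n k k :=
          Finset.sum_congr rfl fun i _ => Finset.sum_congr rfl fun k _ =>
            Finset.sum_congr rfl fun m _ => Finset.sum_congr rfl fun n _ => by
              rw [hps i i m n]
      _ = ∑ m, ∑ n, ∑ i, ∑ k, lam m n i i * lam m n k k := SFaux.sum_swap4 _
      _ = (∑ i, ∑ k, SFaux.tm lam i k * SFaux.tm lam i k) := Finset.sum_congr rfl fun m _ => Finset.sum_congr rfl fun n _ =>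
            (Finset.sum_mul_sum _ _ _ _).symm
  have q3 : (∑ i, ∑ k, ∑ m, ∑ n, lam i k m n * lam m n i k) = Sinv lam := by
    unfold Sinv
    exact Finset.sum_congr rfl fun i _ => Finset.sum_congr rfl fun k _ =>
      Finset.sum_congr rfl fun m _ => Finset.sum_congr rfl fun n _ => by
        rw [← hps i k m n]; ring
  have q5 : ∑ i, ∑ k, (-(4 * Xw y i i k k)) = -(4 * (∑ i, ∑ k, Xw y i i k k)) := by
    simp only [Finset.sum_neg_distrib, ← Finset.mul_sum]
  have q6 : ∑ i, ∑ k, ((1/2) * ∑ m, Zw y i m * lam m i k k) = (1/2) * (∑ i, ∑ k, Zw y i k * SFaux.tm lam i k) := by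
    calc ∑ i, ∑ k, ((1/2) * ∑ m, Zw y i m * lam m i k k)
        = (1/2) * ∑ i, ∑ k, ∑ m, Zw y i m * lam m i k k := by
          simp only [← Finset.mul_sum]
      _ = (1/2) * ∑ i, ∑ m, ∑ k, Zw y i m * lam m i k k := by
          exact congrArg _ (Finset.sum_congr rfl fun i _ => SFaux.c2 _)
      _ = (1/2) * ∑ i, ∑ m, Zw y i m * SFaux.tm lam m i := by
          refine congrArg _ (Finset.sum_congr rfl fun i _ => Finset.sum_congr rfl fun m _ => ?_)
          exact (Finset.mul_sum _ _ _).symm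
      _ = (1/2) * (∑ i, ∑ k, Zw y i k * SFaux.tm lam i k) := by
          refine congrArg _ (Finset.sum_congr rfl fun i _ => Finset.sum_congr rfl fun m _ => ?_)
          rw [htm m i]
  have q7 : ∑ i, ∑ k, ((1/2) * ∑ m, Zw y i m * lam i m k k) = (1/2) * (∑ i, ∑ k, Zw y i k * SFaux.tm lam i k) := by
    calc ∑ i, ∑ k, ((1/2) * ∑ m, Zw y i m * lam i m k k)
        = (1/2) * ∑ i, ∑ k, ∑ m, Zw y i m * lam i m k k := by
          simp only [← Finset.mul_sum]
      _ = (1/2) * ∑ i, ∑ m, ∑ k, Zw y i m * lam i m k k := by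
          exact congrArg _ (Finset.sum_congr rfl fun i _ => SFaux.c2 _)
      _ = (1/2) * (∑ i, ∑ k, Zw y i k * SFaux.tm lam i k) := by
          refine congrArg _ (Finset.sum_congr rfl fun i _ => Finset.sum_congr rfl fun m _ => ?_)
          exact (Finset.mul_sum _ _ _).symm
  have q8 : ∑ i, ∑ k, ((1/2) * ∑ m, Zw y k m * lam i i m k) = (1/2) * (∑ i, ∑ k, Zw y i k * SFaux.tm lam i k) := by
    calc ∑ i, ∑ k, ((1/2) * ∑ m, Zw y k m * lam i i m k)
        = (1/2) * ∑ i, ∑ k, ∑ m, Zw y k m * lam i i m k := by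
          simp only [← Finset.mul_sum]
      _ = (1/2) * ∑ m, ∑ i, ∑ k, Zw y k m * lam i i m k := by
          exact congrArg _ (SFaux.c3 _)
      _ = (1/2) * ∑ k, ∑ m, ∑ i, Zw y k m * lam i i m k := by
          exact congrArg _ (SFaux.c3 _)
      _ = (1/2) * ∑ k, ∑ m, Zw y k m * ∑ i, lam i i m k := by
          refine congrArg _ (Finset.sum_congr rfl fun k _ => Finset.sum_congr rfl fun m _ => ?_)
          exact (Finset.mul_sum _ _ _).symm
      _ = (1/2) * (∑ i, ∑ k, Zw y i k * SFaux.tm lam i k) := by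
          refine congrArg _ (Finset.sum_congr rfl fun k _ => Finset.sum_congr rfl fun m _ => ?_)
          have : (∑ i, lam i i m k) = SFaux.tm lam k m := by
            rw [htm k m]
            exact Finset.sum_congr rfl fun i _ => hps i i m k
          rw [this]
  have q9 : ∑ i, ∑ k, ((1/2) * ∑ m, Zw y k m * lam i i k m) = (1/2) * (∑ i, ∑ k, Zw y i k * SFaux.tm lam i k) := by
    calc ∑ i, ∑ k, ((1/2) * ∑ m, Zw y k m * lam i i k m)
        = (1/2) * ∑ i, ∑ k, ∑ m, Zw y k m * lam i i k m := by
          simp only [← Finset.mul_sum]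
      _ = (1/2) * ∑ m, ∑ i, ∑ k, Zw y k m * lam i i k m := by
          exact congrArg _ (SFaux.c3 _)
      _ = (1/2) * ∑ k, ∑ m, ∑ i, Zw y k m * lam i i k m := by
          exact congrArg _ (SFaux.c3 _)
      _ = (1/2) * ∑ k, ∑ m, Zw y k m * ∑ i, lam i i k m := by
          refine congrArg _ (Finset.sum_congr rfl fun k _ => Finset.sum_congr rfl fun m _ => ?_)
          exact (Finset.mul_sum _ _ _).symm
      _ = (1/2) * (∑ i, ∑ k, Zw y i k * SFaux.tm lam i k) := by
          refine congrArg _ (Finset.sum_congr rfl fun k _ => Finset.sum_congr rfl fun m _ => ?_)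
          have : (∑ i, lam i i k m) = SFaux.tm lam k m := by
            exact Finset.sum_congr rfl fun i _ => hps i i k m
          rw [this]
  have E1 : ε * (∑ i, SFaux.tm lam i i) = (∑ i, ∑ k, SFaux.tm lam i k * SFaux.tm lam i k) + 2 * Sinv lam - 4 * (∑ i, ∑ k, Xw y i i k k) + 2 * (∑ i, ∑ k, Zw y i k * SFaux.tm lam i k) := by
    have h0 : (0:ℝ) = ∑ i, ∑ k, betaLamW ε lam y i i k k := by
      symm
      exact Finset.sum_eq_zero fun i _ => Finset.sum_eq_zero fun k _ => hfpl i i k k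
    rw [show (∑ i, ∑ k, betaLamW ε lam y i i k k)
        = (∑ i, ∑ k, (-ε * lam i i k k)) + (∑ i, ∑ k, ∑ m, ∑ n, lam i i m n * lam m n k k)
        + (∑ i, ∑ k, ∑ m, ∑ n, lam i k m n * lam m n i k)
        + (∑ i, ∑ k, ∑ m, ∑ n, lam i k m n * lam m n i k)
        + (∑ i, ∑ k, (-(4 * Xw y i i k k)))
        + (∑ i, ∑ k, ((1/2) * ∑ m, Zw y i m * lam m i k k))
        + (∑ i, ∑ k, ((1/2) * ∑ m, Zw y i m * lam i m k k))
        + (∑ i, ∑ k, ((1/2) * ∑ m, Zw y k m * lam i i m k))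
        + (∑ i, ∑ k, ((1/2) * ∑ m, Zw y k m * lam i i k m)) from by
      simp only [hsplit, Finset.sum_add_distrib]] at h0
    rw [q1, q2, q3, q5, q6, q7, q8, q9] at h0
    linarith
  ------------------------------------------------------------------
  -- Equation E2 : contraction of the Yukawa beta function
  ------------------------------------------------------------------
  have hC : ∀ i : Fin Ns,
      (-(1 / 2) * (ε : ℂ)) * Matrix.trace (y i * mconj (y i))
        + (1 / 2 : ℂ) * ∑ j, (Matrix.trace (y j * mconj (y j) * (y i * mconj (y i))) + Matrix.trace (y i * mconj (y j) * (y j * mconj (y i)))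
            + 4 * Matrix.trace (y j * mconj (y i) * (y j * mconj (y i))))
        + (1 / 2 : ℂ) * ∑ j, (Zw y i j : ℂ) * Matrix.trace (y j * mconj (y i)) = 0 := by
    intro i
    have h0 : Matrix.trace (betaYW ε y i * mconj (y i)) = 0 := by
      rw [hfpy i, Matrix.zero_mul, Matrix.trace_zero]
    rw [← h0]
    simp only [betaYW, Matrix.add_mul, Matrix.smul_mul, Matrix.sum_mul, Matrix.trace_add,
      Matrix.trace_smul, Matrix.trace_sum, smul_eq_mul, Finset.mul_sum, mul_assoc,
      Matrix.mul_assoc, Finset.sum_add_distrib, mul_add]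
  have hZdiag : ∀ i, (Matrix.trace (y i * mconj (y i))).re = Zw y i i / 2 := by
    intro i
    rw [SFaux.Zw_eq]
    ring
  have hZoff : ∀ i j, (Matrix.trace (y j * mconj (y i))).re = Zw y i j / 2 := by
    intro i j
    rw [SFaux.Zw_symm y i j, SFaux.Zw_eq]
    ring
  have hR : ∀ i : Fin Ns,
      (-(1/2) * ε) * (Zw y i i / 2)
        + (1/2) * (∑ j, ((Matrix.trace (y j * mconj (y j) * (y i * mconj (y i)))).re + (Matrix.trace (y i * mconj (y j) * (y j * mconj (y i)))).re
            + 4 * (Matrix.trace (y j * mconj (y i) * (y j * mconj (y i)))).re))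
        + (1/2) * ∑ j, Zw y i j * (Zw y i j / 2) = 0 := by
    intro i
    have h := congrArg Complex.re (hC i)
    simp only [show (-(1 / 2) * (ε : ℂ)) = ((-(1/2) * ε : ℝ) : ℂ) from by push_cast; ring,
      show ((1:ℂ) / 2) = ((1/2 : ℝ) : ℂ) from by norm_num,
      show ((4:ℂ)) = ((4 : ℝ) : ℂ) from by norm_num,
      ← Complex.ofReal_neg, ← Complex.ofReal_mul,
      Complex.add_re, Complex.re_ofReal_mul, Complex.re_sum, Complex.zero_re] at h
    simp only [hZdiag, hZoff] at h
    linarith [h]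
  have E2 : ε * (∑ i, Zw y i i) = 2 * (∑ i, ∑ k, (Matrix.trace (y i * mconj (y i) * (y k * mconj (y k)))).re) + 2 * (∑ i, ∑ k, (Matrix.trace (y i * mconj (y k) * (y k * mconj (y i)))).re) + 8 * (∑ i, ∑ k, (Matrix.trace (y i * mconj (y k) * (y i * mconj (y k)))).re) + (∑ i, ∑ k, Zw y i k * Zw y i k) := by
    have pA : ∑ i, ((-(1/2) * ε) * (Zw y i i / 2)) = (-(1/2) * ε) * ((∑ i, Zw y i i) / 2) := by
      rw [← Finset.mul_sum, ← Finset.sum_div]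
    have pB : ∑ i, ((1/2) * (∑ j, ((Matrix.trace (y j * mconj (y j) * (y i * mconj (y i)))).re + (Matrix.trace (y i * mconj (y j) * (y j * mconj (y i)))).re
          + 4 * (Matrix.trace (y j * mconj (y i) * (y j * mconj (y i)))).re)))
        = (1/2) * ((∑ i, ∑ k, (Matrix.trace (y i * mconj (y i) * (y k * mconj (y k)))).re) + (∑ i, ∑ k, (Matrix.trace (y i * mconj (y k) * (y k * mconj (y i)))).re) + 4 * (∑ i, ∑ k, (Matrix.trace (y i * mconj (y k) * (y i * mconj (y k)))).re)) := by
      rw [← Finset.mul_sum]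
      congr 1
      calc (∑ i, ∑ j, ((Matrix.trace (y j * mconj (y j) * (y i * mconj (y i)))).re + (Matrix.trace (y i * mconj (y j) * (y j * mconj (y i)))).re
              + 4 * (Matrix.trace (y j * mconj (y i) * (y j * mconj (y i)))).re))
          = (∑ i, ∑ j, (Matrix.trace (y j * mconj (y j) * (y i * mconj (y i)))).re) + (∑ i, ∑ j, (Matrix.trace (y i * mconj (y j) * (y j * mconj (y i)))).re)
            + (∑ i, ∑ j, (4:ℝ) * (Matrix.trace (y j * mconj (y i) * (y j * mconj (y i)))).re) := by
            simp only [Finset.sum_add_distrib]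
        _ = (∑ i, ∑ k, (Matrix.trace (y i * mconj (y i) * (y k * mconj (y k)))).re) + (∑ i, ∑ k, (Matrix.trace (y i * mconj (y k) * (y k * mconj (y i)))).re) + 4 * (∑ i, ∑ k, (Matrix.trace (y i * mconj (y k) * (y i * mconj (y k)))).re) := by
            have e1 : (∑ i, ∑ j, (Matrix.trace (y j * mconj (y j) * (y i * mconj (y i)))).re)
                = ∑ i, ∑ k, (Matrix.trace (y i * mconj (y i) * (y k * mconj (y k)))).re :=
              SFaux.c2 _
            have e2 : (∑ i, ∑ j, (Matrix.trace (y j * mconj (y i) * (y j * mconj (y i)))).re)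
                = ∑ i, ∑ k, (Matrix.trace (y i * mconj (y k) * (y i * mconj (y k)))).re :=
              SFaux.c2 _
            rw [e1]
            simp only [← Finset.mul_sum]
            rw [e2]
    have pC : ∑ i, ((1/2) * ∑ j, Zw y i j * (Zw y i j / 2)) = (1/2) * ((∑ i, ∑ k, Zw y i k * Zw y i k) / 2) := by
      rw [← Finset.mul_sum]
      congr 1
      calc (∑ i, ∑ j, Zw y i j * (Zw y i j / 2)) = ∑ i, ∑ j, (Zw y i j * Zw y i j) / 2 :=
          Finset.sum_congr rfl fun i _ => Finset.sum_congr rfl fun j _ => by ring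
        _ = (∑ i, ∑ k, Zw y i k * Zw y i k) / 2 := by simp only [← Finset.sum_div]
    have h0 : (0:ℝ) = ∑ i : Fin Ns, ((-(1/2) * ε) * (Zw y i i / 2)
        + (1/2) * (∑ j, ((Matrix.trace (y j * mconj (y j) * (y i * mconj (y i)))).re + (Matrix.trace (y i * mconj (y j) * (y j * mconj (y i)))).re
            + 4 * (Matrix.trace (y j * mconj (y i) * (y j * mconj (y i)))).re))
        + (1/2) * ∑ j, Zw y i j * (Zw y i j / 2)) := by
      symm
      exact Finset.sum_eq_zero fun i _ => hR i
    rw [Finset.sum_add_distrib, Finset.sum_add_distrib, pA, pB, pC] at h0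
    linarith
  ------------------------------------------------------------------
  -- assembling
  ------------------------------------------------------------------
  have hQ : (∑ i, ∑ k, (SFaux.tm lam i k + Zw y i k) ^ 2) = (∑ i, ∑ k, SFaux.tm lam i k * SFaux.tm lam i k) + 2 * (∑ i, ∑ k, Zw y i k * SFaux.tm lam i k) + (∑ i, ∑ k, Zw y i k * Zw y i k) := by
    calc (∑ i, ∑ k, (SFaux.tm lam i k + Zw y i k) ^ 2) = ∑ i, ∑ k, (SFaux.tm lam i k * SFaux.tm lam i k
          + 2 * (Zw y i k * SFaux.tm lam i k) + Zw y i k * Zw y i k) :=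
        Finset.sum_congr rfl fun i _ => Finset.sum_congr rfl fun k _ => by ring
      _ = (∑ i, ∑ k, SFaux.tm lam i k * SFaux.tm lam i k) + 2 * (∑ i, ∑ k, Zw y i k * SFaux.tm lam i k) + (∑ i, ∑ k, Zw y i k * Zw y i k) := by
        simp only [Finset.sum_add_distrib, ← Finset.mul_sum]
  have hCS : ((∑ i, SFaux.tm lam i i) + (∑ i, Zw y i i)) ^ 2 ≤ (Ns : ℝ) * (∑ i, ∑ k, (SFaux.tm lam i k + Zw y i k) ^ 2) := by
    have hc1 : ((∑ i, SFaux.tm lam i i) + (∑ i, Zw y i i)) = ∑ i, (SFaux.tm lam i i + Zw y i i) := by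
      rw [Finset.sum_add_distrib]
    have hc2 : (∑ i, (SFaux.tm lam i i + Zw y i i)) ^ 2
        ≤ (∑ i, (SFaux.tm lam i i + Zw y i i) ^ 2) * (Ns : ℝ) := by
      have := Finset.sum_mul_sq_le_sq_mul_sq Finset.univ
        (fun i : Fin Ns => SFaux.tm lam i i + Zw y i i) (fun _ => (1:ℝ))
      simpa [Finset.card_univ] using this
    have hc3 : (∑ i, (SFaux.tm lam i i + Zw y i i) ^ 2) ≤ (∑ i, ∑ k, (SFaux.tm lam i k + Zw y i k) ^ 2) := by
      refine Finset.sum_le_sum fun i _ => ?_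
      exact Finset.single_le_sum (f := fun j => (SFaux.tm lam i j + Zw y i j) ^ 2)
        (fun j _ => sq_nonneg _) (Finset.mem_univ i)
    have hNs0 : (0:ℝ) ≤ (Ns : ℝ) := Nat.cast_nonneg _
    calc ((∑ i, SFaux.tm lam i i) + (∑ i, Zw y i i)) ^ 2 = (∑ i, (SFaux.tm lam i i + Zw y i i)) ^ 2 := by rw [hc1]
      _ ≤ (∑ i, (SFaux.tm lam i i + Zw y i i) ^ 2) * (Ns : ℝ) := hc2
      _ ≤ (∑ i, ∑ k, (SFaux.tm lam i k + Zw y i k) ^ 2) * (Ns : ℝ) := by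
        exact mul_le_mul_of_nonneg_right hc3 hNs0
      _ = (Ns : ℝ) * (∑ i, ∑ k, (SFaux.tm lam i k + Zw y i k) ^ 2) := by ring
  have hfix : ε * ((∑ i, SFaux.tm lam i i) + (∑ i, Zw y i i)) = (∑ i, ∑ k, (SFaux.tm lam i k + Zw y i k) ^ 2) + 2 * (Sinv lam - 6 * (∑ i, ∑ k, (Matrix.trace (y i * mconj (y i) * (y k * mconj (y k)))).re)) := by
    rw [hQ]
    linarith [E1, E2, f2, f3]
  have hNs0 : (0:ℝ) < (Ns : ℝ) := by
    exact_mod_cast Nat.lt_of_lt_of_le Nat.zero_lt_one hNs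
  rw [f1]
  have key : (Ns:ℝ) * (Sinv lam - 6 * (∑ i, ∑ k, (Matrix.trace (y i * mconj (y i) * (y k * mconj (y k)))).re)) ≤ (Ns:ℝ) * ((1/8) * (Ns:ℝ) * ε ^ 2) := by
    nlinarith [hfix, hCS, sq_nonneg ((Ns:ℝ) * ε - 2 * ((∑ i, SFaux.tm lam i i) + (∑ i, Zw y i i)))]
  exact le_of_mul_le_mul_left key hNs0
end
end

section
/- Yukawa fixed points for a single scalar (Ns = 1) with fully interacting Majorana fermions: let y be a symmetric Nf × Nf real matrix satisfying the one-loop Yukawa fixed-point equation β^y = −(1/2) ε y + 3 y³ + (1/2) Tr(y²) y = 0. If y is invertible, then y² = (ε/(Nf + 6)) · I (a multiple of the identity matrix); consequently Tr(y²) = Nf ε/(Nf + 6) and Y = Tr(y⁴) = Nf ε²/(Nf + 6)². -/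
open Matrix

noncomputable section

/-- Yukawa fixed points for a single scalar (`Ns = 1`) with fully interacting Majorana
fermions: if the symmetric real matrix `y` is invertible and satisfies
`−(1/2) ε y + 3 y³ + (1/2) Tr(y²) y = 0`, then `y² = (ε/(Nf + 6)) I`, so
`Tr(y²) = Nf ε/(Nf + 6)` and `Y = Tr(y⁴) = Nf ε²/(Nf + 6)²`. -/
theorem single_scalar_yukawa_fixed_points {Nf : ℕ} (hNf : 1 ≤ Nf) (ε : ℝ)
    (y : Matrix (Fin Nf) (Fin Nf) ℝ) (hy : yᵀ = y)
    (hfp : (-(1 / 2) * ε) • y + (3 : ℝ) • y ^ 3 + ((1 / 2) * Matrix.trace (y * y)) • y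
      = 0)
    (hinv : IsUnit y) :
    y * y = (ε / ((Nf : ℝ) + 6)) • (1 : Matrix (Fin Nf) (Fin Nf) ℝ)
    ∧ Matrix.trace (y * y) = (Nf : ℝ) * ε / ((Nf : ℝ) + 6)
    ∧ Matrix.trace (y * y * (y * y)) = (Nf : ℝ) * ε ^ 2 / ((Nf : ℝ) + 6) ^ 2 := by
  set t : ℝ := Matrix.trace (y * y) with ht
  have hden : ((Nf : ℝ) + 6) ≠ 0 := by positivity
  -- rewrite hfp as (A) * y = 0 with A = (-(1/2)ε + 1/2 t) • 1 + 3 • (y*y)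
  have hfac : (((-(1 / 2) * ε + (1 / 2) * t) • (1 : Matrix (Fin Nf) (Fin Nf) ℝ)
      + (3 : ℝ) • (y * y)) * y) = 0 := by
    have : (-(1 / 2) * ε) • y + (3 : ℝ) • y ^ 3 + ((1 / 2) * t) • y
        = ((-(1 / 2) * ε + (1 / 2) * t) • (1 : Matrix (Fin Nf) (Fin Nf) ℝ)
          + (3 : ℝ) • (y * y)) * y := by
      simp [add_mul, Matrix.smul_mul, add_smul, pow_succ, pow_two]
      ring_nf
      noncomm_ring
    rw [this] at hfp
    exact hfp
  have hA : ((-(1 / 2) * ε + (1 / 2) * t) • (1 : Matrix (Fin Nf) (Fin Nf) ℝ)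
      + (3 : ℝ) • (y * y)) = 0 := by
    have h1 : y * y⁻¹ = 1 :=
      Matrix.mul_nonsing_inv y ((Matrix.isUnit_iff_isUnit_det y).mp hinv)
    have := congrArg (fun M => M * y⁻¹) hfac
    simpa [mul_assoc, h1] using this
  have hsq : y * y = ((ε - t) / 6) • (1 : Matrix (Fin Nf) (Fin Nf) ℝ) := by
    linear_combination (norm := module) ((1 : ℝ)/3) • hA
  have htr : t = (Nf : ℝ) * ((ε - t) / 6) := by
    have := congrArg Matrix.trace hsq
    simpa [Matrix.trace_smul, Matrix.trace_one, mul_comm] using this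
  have htval : t = (Nf : ℝ) * ε / ((Nf : ℝ) + 6) := by
    field_simp at htr ⊢
    linarith
  have hc : (ε - t) / 6 = ε / ((Nf : ℝ) + 6) := by
    rw [htval]; field_simp; ring
  refine ⟨by rw [hsq, hc], htval, ?_⟩
  rw [hsq, hc]
  simp [smul_smul, Matrix.trace_smul, Matrix.trace_one]
  field_simp
end
end
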